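/- Let e be an edge of a simple graph and let f^n_e denote the number of n-cycles of the graph containing e (with faces inserted only so that the augmented complex is quasiconvex). Then the augmented Forman-Ricci curvature F_Aug(e) = 2 + |f_e| − #{e' ≠ e : e' shares a node xor a face with e} equals F(e) + Σ_{n≥3} (6 − n)·|f^n_e|, where F(e) = 4 − deg(v1) − deg(v2), provided every edge e' ≠ e sharing a face with e shares either a node or exactly one face with e but not both being counted doubly (quasiconvexity: any two faces share at most one edge). -/

import Mathlib

/-!
Among the edges `e' ≠ e`, let `A` be those sharing a vertex with `e` and `B` those sharing a
face with `e`; the edges counted in `F_Aug(e)` form `A ∆ B`, of size `|A| + |B| - 2 |A ∩ B|`.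
Here `|A| = deg v1 + deg v2 - 2`. Quasiconvexity makes the sets `f \ {e}`, for the faces
`f ∋ e`, pairwise disjoint, so `|B| = Σ (|f| - 1)`; and since a cycle has exactly two edges at
each of its vertices, every such face contributes exactly two edges to `A ∩ B`.
-/

open Finset SimpleGraph
open scoped symmDiff

namespace Finset

variable {α : Type*} [DecidableEq α]

theorem card_symmDiff_add_two_mul_card_inter (s t : Finset α) :
    (s ∆ t).card + 2 * (s ∩ t).card = s.card + t.card := by
  rw [symmDiff_eq_sup_sdiff_inf, sup_eq_union, inf_eq_inter,
    card_sdiff_of_subset inter_subset_union, two_mul, ← add_assoc,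
    Nat.sub_add_cancel (card_le_card inter_subset_union), card_union_add_card_inter]

theorem setOf_mem_and_xor_eq_coe_symmDiff (s : Finset α) (p q : α → Prop) [DecidablePred p]
    [DecidablePred q] : {a | a ∈ s ∧ Xor (p a) (q a)} = ↑(s.filter p ∆ s.filter q) := by
  ext a
  simp only [Set.mem_ofPred_eq, coe_symmDiff, Set.mem_symmDiff, coe_filter, Xor]
  tauto

theorem pairwiseDisjoint_erase_of_card_inter_le_one {F : Finset (Finset α)} {a : α}
    (ha : ∀ f ∈ F, a ∈ f) (hF : ∀ f ∈ F, ∀ g ∈ F, f ≠ g → (f ∩ g).card ≤ 1) :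
    (F : Set (Finset α)).PairwiseDisjoint (·.erase a) := by
  intro f hf g hg hfg
  rw [Function.onFun, disjoint_left]
  intro b hbf hbg
  rw [mem_erase] at hbf hbg
  have hsub : {b, a} ⊆ f ∩ g := by
    simp only [insert_subset_iff, singleton_subset_iff, mem_inter]
    exact ⟨⟨hbf.2, hbg.2⟩, ha f hf, ha g hg⟩
  have htwo : 2 ≤ (f ∩ g).card := card_pair hbf.1 ▸ card_le_card hsub
  have hone := hF f hf g hg hfg
  omega

theorem card_biUnion_erase_add_card_of_card_inter_le_one {F : Finset (Finset α)} {a : α}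
    (ha : ∀ f ∈ F, a ∈ f) (hF : ∀ f ∈ F, ∀ g ∈ F, f ≠ g → (f ∩ g).card ≤ 1) :
    (F.biUnion (·.erase a)).card + F.card = ∑ f ∈ F, f.card := by
  rw [card_biUnion (pairwiseDisjoint_erase_of_card_inter_le_one ha hF), card_eq_sum_ones,
    ← sum_add_distrib]
  exact sum_congr rfl fun f hf => card_erase_add_one (ha f hf)

end Finset

namespace SimpleGraph

variable {V : Type*} [DecidableEq V] {G : SimpleGraph V}

theorem card_erase_filter_mem_or_mem_add_two [Fintype V] [DecidableRel G.Adj] {a b : V}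
    (h : G.Adj a b) :
    ((G.edgeFinset.erase s(a, b)).filter (fun e => a ∈ e ∨ b ∈ e)).card + 2
      = G.degree a + G.degree b := by
  have hunion : (G.edgeFinset.erase s(a, b)).filter (fun e => a ∈ e ∨ b ∈ e)
      = (G.incidenceFinset a ∪ G.incidenceFinset b).erase s(a, b) := by
    ext e
    simp only [mem_filter, mem_erase, mem_union, mem_incidenceFinset, incidenceSet,
      mem_edgeFinset, Set.mem_ofPred_eq]
    tauto
  have hinter : G.incidenceFinset a ∩ G.incidenceFinset b = {s(a, b)} := by
    rw [← coe_inj, coe_inter, coe_incidenceFinset, coe_incidenceFinset, coe_singleton,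
      G.incidenceSet_inter_incidenceSet_of_adj h]
  have hmem : s(a, b) ∈ G.incidenceFinset a ∪ G.incidenceFinset b :=
    mem_union_left _ ((mem_incidenceFinset _ _ _).mpr ⟨h, Sym2.mem_mk_left _ _⟩)
  have := card_union_add_card_inter (G.incidenceFinset a) (G.incidenceFinset b)
  rw [hinter, card_singleton, card_incidenceFinset_eq_degree,
    card_incidenceFinset_eq_degree, ← card_erase_add_one hmem, ← hunion] at this
  omega

namespace Walk.IsCycle

variable {u : V} {p : G.Walk u u}

theorem card_filter_mem_edges (hp : p.IsCycle) {v : V} (hv : v ∈ p.support) :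
    (p.edges.toFinset.filter (v ∈ ·)).card = 2 := by
  have himage : (fun w => s(v, w)) '' p.toSubgraph.neighborSet v
      = ↑(p.edges.toFinset.filter (v ∈ ·)) := by
    ext e
    simp only [Set.mem_image, Subgraph.mem_neighborSet, coe_filter, List.mem_toFinset,
      Set.mem_ofPred_eq, adj_toSubgraph_iff_mem_edges]
    constructor
    · rintro ⟨w, hw, rfl⟩
      exact ⟨hw, Sym2.mem_mk_left _ _⟩
    · rintro ⟨he, hve⟩
      obtain ⟨w, rfl⟩ := Sym2.mem_iff_exists.mp hve
      exact ⟨w, he, rfl⟩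
  rw [← Set.ncard_coe_finset, ← himage,
    Set.ncard_image_of_injective _ fun _ _ => Sym2.congr_right.mp,
    hp.ncard_neighborSet_toSubgraph_eq_two hv]

theorem card_filter_mem_or_mem_edges (hp : p.IsCycle) {a b : V} (h : G.Adj a b)
    (hab : s(a, b) ∈ p.edges) :
    (p.edges.toFinset.filter (fun e => a ∈ e ∨ b ∈ e)).card = 3 := by
  have hinter : p.edges.toFinset.filter (a ∈ ·) ∩ p.edges.toFinset.filter (b ∈ ·)
      = {s(a, b)} := by
    ext e
    simp only [mem_inter, mem_filter, List.mem_toFinset, mem_singleton]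
    constructor
    · rintro ⟨⟨-, hae⟩, -, hbe⟩
      exact (Sym2.mem_and_mem_iff h.ne).mp ⟨hae, hbe⟩
    · rintro rfl
      exact ⟨⟨hab, Sym2.mem_mk_left _ _⟩, hab, Sym2.mem_mk_right _ _⟩
  have := card_union_add_card_inter (p.edges.toFinset.filter (a ∈ ·))
    (p.edges.toFinset.filter (b ∈ ·))
  rw [hinter, card_singleton, ← filter_or,
    hp.card_filter_mem_edges (p.fst_mem_support_of_mem_edges hab),
    hp.card_filter_mem_edges (p.snd_mem_support_of_mem_edges hab)] at this
  omega

end Walk.IsCycle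

end SimpleGraph

/-- Let `e = (v1,v2)` be an edge of a simple graph and insert a 2-face into
each of a collection of cycles of the graph, so that the resulting augmented complex is
quasiconvex (any two faces share at most one edge).  Let `|f^n_e|` be the number of
`n`-gonal faces containing `e` and `|f_e|` the total number of faces containing `e`.
Then the augmented Forman–Ricci curvature
`F_Aug(e) = 2 + |f_e| − #{e' ≠ e : e' shares a node xor a face with e}`
equals `F(e) + Σ_{n ≥ 3} (6 − n)·|f^n_e|`, where `F(e) = 4 − deg(v1) − deg(v2)`
(the sum over `n` being written as a sum of `6 − card f` over the faces `f` containing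
`e`). -/
theorem stmt5 {V : Type*} [Fintype V] [DecidableEq V] (G : SimpleGraph V)
    [DecidableRel G.Adj]
    (faces : Finset (Finset (Sym2 V)))
    (hcycle : ∀ f ∈ faces, ∃ (u : V) (p : G.Walk u u), p.IsCycle ∧ p.edges.toFinset = f)
    (hquasi : ∀ f ∈ faces, ∀ g ∈ faces, f ≠ g → (f ∩ g).card ≤ 1)
    (v1 v2 : V) (h : G.Adj v1 v2) :
    (2 : ℤ) + ((faces.filter (fun f => s(v1, v2) ∈ f)).card : ℤ)
      - ({e' : Sym2 V | e' ∈ G.edgeSet ∧ e' ≠ s(v1, v2) ∧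
            Xor' (∃ v, v ∈ e' ∧ v ∈ s(v1, v2))
                 (∃ f ∈ faces, s(v1, v2) ∈ f ∧ e' ∈ f)}.ncard : ℤ)
      = (4 - (G.degree v1 : ℤ) - (G.degree v2 : ℤ))
        + ∑ f ∈ faces.filter (fun f => s(v1, v2) ∈ f), ((6 : ℤ) - (f.card : ℤ)) := by
  classical
  set e := s(v1, v2)
  set F := faces.filter (fun f => e ∈ f)
  set P : Sym2 V → Prop := fun e' => v1 ∈ e' ∨ v2 ∈ e'
  set A := (G.edgeFinset.erase e).filter P
  set B := F.biUnion (·.erase e)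
  have hF_mem : ∀ f ∈ F, e ∈ f := fun f hf => (mem_filter.mp hf).2
  have hF_quasi : ∀ f ∈ F, ∀ g ∈ F, f ≠ g → (f ∩ g).card ≤ 1 :=
    fun f hf g hg => hquasi f (mem_filter.mp hf).1 g (mem_filter.mp hg).1
  have hB_sub : B ⊆ G.edgeFinset.erase e := by
    simp only [B, biUnion_subset]
    intro f hf
    obtain ⟨u, p, -, rfl⟩ := hcycle f (mem_filter.mp hf).1
    exact erase_subset_erase _ fun e' he' => mem_edgeFinset.mpr
      (p.edges_subset_edgeSet (List.mem_toFinset.mp he'))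
  have hset : {e' : Sym2 V | e' ∈ G.edgeSet ∧ e' ≠ e ∧
      Xor' (∃ v, v ∈ e' ∧ v ∈ e) (∃ f ∈ faces, e ∈ f ∧ e' ∈ f)} = ↑(A ∆ B) := by
    rw [← inter_eq_right.mpr hB_sub, ← filter_mem_eq_inter,
      ← setOf_mem_and_xor_eq_coe_symmDiff]
    ext e'
    simp only [Set.mem_ofPred_eq, mem_erase, mem_edgeFinset, mem_biUnion, mem_filter,
      B, F, P, e, Xor', Xor, Sym2.mem_iff]
    grind
  have hAB : (A ∩ B).card = 2 * F.card := by
    rw [filter_inter, inter_eq_right.mpr hB_sub, filter_biUnion,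
      card_biUnion ((pairwiseDisjoint_erase_of_card_inter_le_one hF_mem hF_quasi).mono
        fun f => filter_subset _ _)]
    refine (sum_const_nat fun f hf => ?_).trans (mul_comm _ _)
    have he : e ∈ f := hF_mem f hf
    obtain ⟨u, p, hp, rfl⟩ := hcycle f (mem_filter.mp hf).1
    rw [filter_erase, card_erase_of_mem (mem_filter.mpr ⟨he, Or.inl (Sym2.mem_mk_left _ _)⟩),
      hp.card_filter_mem_or_mem_edges h (List.mem_toFinset.mp he)]
  have hA := card_erase_filter_mem_or_mem_add_two h
  have hB := card_biUnion_erase_add_card_of_card_inter_le_one hF_mem hF_quasi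
  have hsymm := card_symmDiff_add_two_mul_card_inter A B
  rw [hset, Set.ncard_coe_finset, sum_sub_distrib, sum_const, nsmul_eq_mul]
  zify at hA hB hAB hsymm
  linarith
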